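/- arXiv:1511.08086 — 2 statements merged into one kernel-verified Lean document; each statement's English description precedes it below -/
import Mathlib

section
/- Let G be a finite simple graph with no isolated vertex, and let H be a finite simple graph with domination number γ(H) ≥ 2. Then γ(G) ≤ γ(G[H]) ≤ γ(G) + ι(G), where ι(G) is the monitor number of G. -/
/-- The lexicographic product `G[H]` of two simple graphs: `(a, x)` is adjacent to
`(b, y)` iff `a` is adjacent to `b` in `G`, or `a = b` and `x` is adjacent to `y` in `H`. -/
def lexProd {α β : Type*} (G : SimpleGraph α) (H : SimpleGraph β) :
    SimpleGraph (α × β) where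
  Adj p q := G.Adj p.1 q.1 ∨ (p.1 = q.1 ∧ H.Adj p.2 q.2)
  symm := by
    constructor
    rintro ⟨a, x⟩ ⟨b, y⟩ (h | ⟨rfl, h⟩)
    · exact Or.inl h.symm
    · exact Or.inr ⟨rfl, h.symm⟩
  loopless := by
    constructor
    rintro ⟨a, x⟩ (h | ⟨-, h⟩)
    · exact G.loopless.irrefl a h
    · exact H.loopless.irrefl x h

/-- `S` is a dominating set of `G`: every vertex not in `S` is adjacent to a vertex of `S`. -/
def IsDomSet {α : Type*} (G : SimpleGraph α) (S : Finset α) : Prop :=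
  ∀ v, v ∉ S → ∃ u ∈ S, G.Adj u v

/-- The domination number `γ(G)`: the minimum cardinality of a dominating set of `G`. -/
noncomputable def gamma {α : Type*} [Fintype α] (G : SimpleGraph α) : ℕ :=
  sInf {n | ∃ S : Finset α, IsDomSet G S ∧ S.card = n}

/-- `U` is a monitor set of `D` in `G`: every vertex of `D` lies in the closed
neighborhood `N[U]` of `U`. -/
def IsMonitorSet {α : Type*} (G : SimpleGraph α) (U D : Finset α) : Prop :=
  ∀ v ∈ D, v ∈ U ∨ ∃ u ∈ U, G.Adj u v

/-- The monitor number `ι(D)` of a set `D`: the minimum cardinality of a monitor set of `D`. -/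
noncomputable def iotaSet {α : Type*} [Fintype α] (G : SimpleGraph α) (D : Finset α) : ℕ :=
  sInf {n | ∃ U : Finset α, IsMonitorSet G U D ∧ U.card = n}

/-- The monitor number `ι(G) = min {ι(D) : D is a γ-set of G}`. -/
noncomputable def iota {α : Type*} [Fintype α] (G : SimpleGraph α) : ℕ :=
  sInf {n | ∃ D : Finset α, IsDomSet G D ∧ D.card = gamma G ∧ iotaSet G D = n}

/-!
Projecting a dominating set of `G[H]` to its first coordinates gives a dominating set of `G`,
which yields the lower bound. For the upper bound take a γ-set `D` of `G` with `ι(D) = ι(G)`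
and a minimum monitor set `U` of `D`. Replacing each vertex of `U ∩ D` by one of its neighbours
(there are no isolated vertices) turns `D ∪ U` into a total dominating set `T` of `G` with
`|T| ≤ γ(G) + ι(G)`, and `T × {x}` dominates `G[H]` for any vertex `x` of `H`.
-/

/-- A total dominating set: every vertex, including those of `T`, has a neighbour in `T`. -/
def IsTotalDomSet {α : Type*} (G : SimpleGraph α) (T : Finset α) : Prop :=
  ∀ v, ∃ u ∈ T, G.Adj u v

section Extremal

variable {α : Type*} [Fintype α] (G : SimpleGraph α)

lemma exists_isDomSet_card_eq_gamma : ∃ S : Finset α, IsDomSet G S ∧ S.card = gamma G :=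
  Nat.sInf_mem (s := {n | ∃ S : Finset α, IsDomSet G S ∧ S.card = n})
    ⟨_, Finset.univ, fun v hv => absurd (Finset.mem_univ v) hv, rfl⟩

lemma gamma_le_card {S : Finset α} (h : IsDomSet G S) : gamma G ≤ S.card :=
  Nat.sInf_le ⟨S, h, rfl⟩

lemma nonempty_of_gamma_pos (h : 0 < gamma G) : Nonempty α := by
  by_contra hα
  rw [not_nonempty_iff] at hα
  have hzero : gamma G ≤ 0 := gamma_le_card G (S := ∅) fun v => isEmptyElim v
  omega

lemma exists_isMonitorSet_card_eq_iotaSet (D : Finset α) :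
    ∃ U : Finset α, IsMonitorSet G U D ∧ U.card = iotaSet G D :=
  Nat.sInf_mem (s := {n | ∃ U : Finset α, IsMonitorSet G U D ∧ U.card = n})
    ⟨_, Finset.univ, fun v _ => Or.inl (Finset.mem_univ v), rfl⟩

lemma exists_isDomSet_isMonitorSet_card_eq_iota :
    ∃ D U : Finset α, IsDomSet G D ∧ D.card = gamma G ∧
      IsMonitorSet G U D ∧ U.card = iota G := by
  obtain ⟨D, hD, hDcard⟩ := exists_isDomSet_card_eq_gamma G
  obtain ⟨D, hD, hDcard, hDiota⟩ : ∃ D : Finset α,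
      IsDomSet G D ∧ D.card = gamma G ∧ iotaSet G D = iota G :=
    Nat.sInf_mem
      (s := {n | ∃ D : Finset α, IsDomSet G D ∧ D.card = gamma G ∧ iotaSet G D = n})
      ⟨_, D, hD, hDcard, rfl⟩
  obtain ⟨U, hU, hUcard⟩ := exists_isMonitorSet_card_eq_iotaSet G D
  exact ⟨D, U, hD, hDcard, hU, hUcard.trans hDiota⟩

end Extremal

lemma IsDomSet.image_fst {α β : Type*} [DecidableEq α] {G : SimpleGraph α} {H : SimpleGraph β}
    {S : Finset (α × β)} (hS : IsDomSet (lexProd G H) S) (x : β) :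
    IsDomSet G (S.image Prod.fst) := by
  intro v hv
  have hvx : (v, x) ∉ S := fun h => hv (Finset.mem_image_of_mem _ h)
  obtain ⟨⟨u, y⟩, huy, hadj | ⟨rfl, -⟩⟩ := hS (v, x) hvx
  · exact ⟨u, Finset.mem_image_of_mem _ huy, hadj⟩
  · exact absurd (Finset.mem_image_of_mem _ huy) hv

lemma IsTotalDomSet.isDomSet_lexProd {α β : Type*} {G : SimpleGraph α} (H : SimpleGraph β)
    {T : Finset α} (hT : IsTotalDomSet G T) (x : β) :
    IsDomSet (lexProd G H) (T ×ˢ {x}) := by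
  rintro ⟨v, y⟩ -
  obtain ⟨u, hu, hadj⟩ := hT v
  exact ⟨(u, x), Finset.mem_product.mpr ⟨hu, Finset.mem_singleton_self x⟩, Or.inl hadj⟩

lemma exists_isTotalDomSet_card_le {α : Type*} {G : SimpleGraph α}
    (hG : ∀ v, ∃ u, G.Adj u v) {D U : Finset α} (hD : IsDomSet G D)
    (hU : IsMonitorSet G U D) :
    ∃ T : Finset α, IsTotalDomSet G T ∧ T.card ≤ D.card + U.card := by
  classical
  choose nbr hnbr using hG
  let move : α → α := fun u => if u ∈ D then nbr u else u
  refine ⟨D ∪ U.image move, ?_, ?_⟩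
  · intro v
    by_cases hvD : v ∈ D
    · rcases hU v hvD with hvU | ⟨u, huU, hadj⟩
      · refine ⟨nbr v, Finset.mem_union_right _ (Finset.mem_image.mpr ⟨v, hvU, ?_⟩),
          hnbr v⟩
        simp only [move, if_pos hvD]
      · by_cases huD : u ∈ D
        · exact ⟨u, Finset.mem_union_left _ huD, hadj⟩
        · refine ⟨u, Finset.mem_union_right _ (Finset.mem_image.mpr ⟨u, huU, ?_⟩), hadj⟩
          simp only [move, if_neg huD]
    · obtain ⟨d, hd, hadj⟩ := hD v hvD
      exact ⟨d, Finset.mem_union_left _ hd, hadj⟩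
  · calc (D ∪ U.image move).card ≤ D.card + (U.image move).card := Finset.card_union_le _ _
      _ ≤ D.card + U.card := Nat.add_le_add_left Finset.card_image_le _

section LexProd

variable {α β : Type*} [Fintype α] [Fintype β] [Nonempty β] (G : SimpleGraph α)
  (H : SimpleGraph β)

lemma gamma_le_gamma_lexProd : gamma G ≤ gamma (lexProd G H) := by
  classical
  obtain ⟨S, hS, hScard⟩ := exists_isDomSet_card_eq_gamma (lexProd G H)
  calc gamma G ≤ (S.image Prod.fst).card :=
        gamma_le_card G (hS.image_fst (Classical.arbitrary β))
    _ ≤ S.card := Finset.card_image_le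
    _ = gamma (lexProd G H) := hScard

lemma gamma_lexProd_le_gamma_add_iota (hG : ∀ v, ∃ u, G.Adj u v) :
    gamma (lexProd G H) ≤ gamma G + iota G := by
  classical
  obtain ⟨D, U, hD, hDcard, hU, hUcard⟩ := exists_isDomSet_isMonitorSet_card_eq_iota G
  obtain ⟨T, hT, hTcard⟩ := exists_isTotalDomSet_card_le hG hD hU
  calc gamma (lexProd G H) ≤ (T ×ˢ {Classical.arbitrary β}).card :=
        gamma_le_card _ (hT.isDomSet_lexProd H _)
    _ = T.card := by rw [Finset.card_product, Finset.card_singleton, mul_one]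
    _ ≤ gamma G + iota G := hDcard ▸ hUcard ▸ hTcard

end LexProd

/-- If `G` has no isolated vertex and `γ(H) ≥ 2`, then
`γ(G) ≤ γ(G[H]) ≤ γ(G) + ι(G)`. -/
theorem gamma_lexProd_bounds {α β : Type*} [Fintype α] [Fintype β]
    (G : SimpleGraph α) (H : SimpleGraph β)
    (hG : ∀ v : α, ∃ u : α, G.Adj u v) (hH : 2 ≤ gamma H) :
    gamma G ≤ gamma (lexProd G H) ∧ gamma (lexProd G H) ≤ gamma G + iota G := by
  have : Nonempty β := nonempty_of_gamma_pos H (by omega)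
  exact ⟨gamma_le_gamma_lexProd G H, gamma_lexProd_le_gamma_add_iota G H hG⟩
end

section
/- For every simple graph G and natural number n, the lexicographic product Fₙ[G] is isomorphic to the join G ∨ n(G ∨ G) of one copy of G with the disjoint union of n copies of the join G ∨ G, where Fₙ is the friendship graph. -/
/-- The join of two simple graphs: the disjoint union of `G` and `H` together with all
edges between vertices of `G` and vertices of `H`. -/
def joinG {α β : Type*} (G : SimpleGraph α) (H : SimpleGraph β) :
    SimpleGraph (α ⊕ β) where
  Adj u v := match u, v with
    | Sum.inl a, Sum.inl b => G.Adj a b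
    | Sum.inr a, Sum.inr b => H.Adj a b
    | _, _ => True
  symm := by constructor; rintro (a | a) (b | b) h <;> simp_all <;> exact h.symm
  loopless := by constructor; rintro (a | a) h <;> simp_all

/-- `nCopies n G` is the disjoint union of `n` copies of `G`: `(i, x)` is adjacent to
`(j, y)` iff `i = j` and `x` is adjacent to `y` in `G`. -/
def nCopies {α : Type*} (n : ℕ) (G : SimpleGraph α) : SimpleGraph (Fin n × α) where
  Adj p q := p.1 = q.1 ∧ G.Adj p.2 q.2
  symm := by constructor; rintro ⟨i, x⟩ ⟨j, y⟩ ⟨rfl, h⟩; exact ⟨rfl, h.symm⟩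
  loopless := by constructor; rintro ⟨i, x⟩ ⟨-, h⟩; exact G.loopless.irrefl x h

/-- The friendship graph `F_n`, obtained by identifying one vertex from each of `n`
triangles into the single common vertex `none`; the remaining vertices are `some (i, k)`,
where `i` indexes the triangle. -/
def friendshipG (n : ℕ) : SimpleGraph (Option (Fin n × Fin 2)) where
  Adj u v := u ≠ v ∧ (u = none ∨ v = none ∨ ∃ i k l, u = some (i, k) ∧ v = some (i, l))
  symm := by
    constructor
    rintro u v ⟨h1, h2 | h2 | ⟨i, k, l, hu, hv⟩⟩
    · exact ⟨h1.symm, Or.inr (Or.inl h2)⟩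
    · exact ⟨h1.symm, Or.inl h2⟩
    · exact ⟨h1.symm, Or.inr (Or.inr ⟨i, l, k, hv, hu⟩)⟩
  loopless := by constructor; rintro u ⟨h1, -⟩; exact h1 rfl

/-! Since `Fₙ = K₁ ∨ n(K₁ ∨ K₁)`, the theorem follows from three rules for the lexicographic
product with a fixed right factor: it distributes over joins, it commutes with disjoint copies,
and a one-vertex left factor gives back the right factor. -/

section Congr

variable {α α' β β' : Type*} {A : SimpleGraph α} {A' : SimpleGraph α'} {B : SimpleGraph β}
  {B' : SimpleGraph β'}

def lexProdCongrLeft (e : A ≃g A') (G : SimpleGraph β) : lexProd A G ≃g lexProd A' G where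
  toEquiv := e.toEquiv.prodCongr (Equiv.refl β)
  map_rel_iff' := by
    rintro ⟨a, x⟩ ⟨b, y⟩
    simp [lexProd, e.map_adj_iff]

def joinGCongr (e : A ≃g A') (f : B ≃g B') : joinG A B ≃g joinG A' B' where
  toEquiv := e.toEquiv.sumCongr f.toEquiv
  map_rel_iff' := by
    rintro (a | a) (b | b) <;> simp [joinG, e.map_adj_iff, f.map_adj_iff]

def nCopiesCongr (n : ℕ) (e : A ≃g A') : nCopies n A ≃g nCopies n A' where
  toEquiv := (Equiv.refl (Fin n)).prodCongr e.toEquiv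
  map_rel_iff' := by
    rintro ⟨i, x⟩ ⟨j, y⟩
    simp [nCopies, e.map_adj_iff]

end Congr

section LexProd

variable {α β γ : Type*} (A : SimpleGraph α) (B : SimpleGraph β) (G : SimpleGraph γ)

def lexProdJoinG : lexProd (joinG A B) G ≃g joinG (lexProd A G) (lexProd B G) where
  toEquiv := Equiv.sumProdDistrib α β γ
  map_rel_iff' := by
    rintro ⟨a | a, x⟩ ⟨b | b, y⟩ <;> simp [lexProd, joinG]

def lexProdNCopies (n : ℕ) : lexProd (nCopies n A) G ≃g nCopies n (lexProd A G) where
  toEquiv := Equiv.prodAssoc (Fin n) α γ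
  map_rel_iff' := by
    rintro ⟨⟨i, a⟩, x⟩ ⟨⟨j, b⟩, y⟩
    simp only [lexProd, nCopies, Equiv.prodAssoc_apply, Prod.mk.injEq]
    tauto

def lexProdOfUnique [Unique α] : lexProd A G ≃g G where
  toEquiv := Equiv.uniqueProd γ α
  map_rel_iff' := by
    rintro ⟨a, x⟩ ⟨b, y⟩
    simp [lexProd, Subsingleton.elim a b]

end LexProd

def friendshipGIsoJoinG (n : ℕ) :
    friendshipG n ≃g joinG (⊥ : SimpleGraph Unit)
      (nCopies n (joinG (⊥ : SimpleGraph Unit) (⊥ : SimpleGraph Unit))) where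
  toFun
    | none => .inl ()
    | some (i, k) => .inr (i, if k = 0 then .inl () else .inr ())
  invFun
    | .inl _ => none
    | .inr (i, .inl _) => some (i, 0)
    | .inr (i, .inr _) => some (i, 1)
  left_inv := by rintro (_ | ⟨i, k⟩) <;> (try fin_cases k) <;> rfl
  right_inv := by rintro (_ | ⟨i, _ | _⟩) <;> rfl
  map_rel_iff' := by
    rintro (_ | ⟨i, k⟩) (_ | ⟨j, l⟩) <;> (try fin_cases k) <;> (try fin_cases l) <;>
      simp [friendshipG, joinG, nCopies, eq_comm]

/-- `Fₙ[G]` is isomorphic to the join `G ∨ n(G ∨ G)` of one copy of `G` with the disjoint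
union of `n` copies of the join `G ∨ G`. -/
theorem lexProd_friendship_iso_join {α : Type*} (G : SimpleGraph α) (n : ℕ) :
    Nonempty (lexProd (friendshipG n) G ≃g joinG G (nCopies n (joinG G G))) := by
  let K₁ : SimpleGraph Unit := ⊥
  have lexProd_K₂ : lexProd (joinG K₁ K₁) G ≃g joinG G G :=
    (lexProdJoinG K₁ K₁ G).trans (joinGCongr (lexProdOfUnique K₁ G) (lexProdOfUnique K₁ G))
  exact ⟨(lexProdCongrLeft (friendshipGIsoJoinG n) G).trans <|
    (lexProdJoinG K₁ _ G).trans <|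
      joinGCongr (lexProdOfUnique K₁ G) <|
        (lexProdNCopies _ G n).trans (nCopiesCongr n lexProd_K₂)⟩
end
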